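/- A nested-sequent Γ ⇒ Δ, T is valid if and only if the MB-formula τ(Γ ⇒ Δ, T) is valid. -/
import Mathlib


set_option maxHeartbeats 1000000

namespace MBQL

/-- The fixed finite set `J ⊆ [0,1]` of inner-product values, with `0, 1 ∈ J`. -/
structure MBParams where
  J : Set ℝ
  finite : J.Finite
  subI : J ⊆ Set.Icc (0:ℝ) 1
  zero_mem : (0:ℝ) ∈ J
  one_mem : (1:ℝ) ∈ J

/-- Formulas of **MB**: `A ::= p | ⊤ | ⊥ | ¬A | A∧A | □^c_α A | □^o_α A` (α ∈ J). -/
inductive MBForm (Pm : MBParams) : Type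
  | var : ℕ → MBForm Pm
  | top : MBForm Pm
  | bot : MBForm Pm
  | neg : MBForm Pm → MBForm Pm
  | conj : MBForm Pm → MBForm Pm → MBForm Pm
  | boxc : Pm.J → MBForm Pm → MBForm Pm
  | boxo : Pm.J → MBForm Pm → MBForm Pm

noncomputable instance {Pm : MBParams} : DecidableEq (MBForm Pm) := Classical.decEq _

/-- Valuation of a formula, given worlds `S`, a relation `R : S → S → ℝ` and a
valuation `V` of the propositional variables. -/
def MBForm.valR {Pm : MBParams} {S : Type} (R : S → S → ℝ) (V : ℕ → Set S) :
    MBForm Pm → Set S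
  | .var n => V n
  | .top => Set.univ
  | .bot => ∅
  | .neg A => (A.valR R V)ᶜ
  | .conj A B => A.valR R V ∩ B.valR R V
  | .boxc α A => {s | ∀ t, (α : ℝ) ≤ R s t → t ∈ A.valR R V}
  | .boxo α A => {s | ∀ t, (α : ℝ) < R s t → t ∈ A.valR R V}

/-- An EQL-frame. -/
structure EQLFrame where
  S : Type
  nonempty : Nonempty S
  R : S → S → ℝ
  mem_Icc : ∀ s t, R s t ∈ Set.Icc (0:ℝ) 1
  eq_one_iff : ∀ s t, (R s t = 1 ↔ s = t)
  symm : ∀ s t, R s t = R t s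

/-- An MB-realization. -/
structure MBRealization (Pm : MBParams) where
  F : EQLFrame
  P : Set (Set F.S)
  univ_mem : Set.univ ∈ P
  empty_mem : ∅ ∈ P
  inter_mem : ∀ X ∈ P, ∀ Y ∈ P, X ∩ Y ∈ P
  compl_mem : ∀ X ∈ P, Xᶜ ∈ P
  boxc_mem : ∀ α ∈ Pm.J, ∀ X ∈ P, {s | ∀ t, α ≤ F.R s t → t ∈ X} ∈ P
  boxo_mem : ∀ α ∈ Pm.J, ∀ X ∈ P, {s | ∀ t, α < F.R s t → t ∈ X} ∈ P
  V : ℕ → Set F.S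
  V_mem : ∀ n, V n ∈ P

/-- The extended valuation of a formula in an MB-realization. -/
def MBRealization.val {Pm : MBParams} (M : MBRealization Pm) (A : MBForm Pm) :
    Set M.F.S := A.valR M.F.R M.V

/-- Validity of an MB-formula. -/
def MBValid {Pm : MBParams} (A : MBForm Pm) : Prop :=
  ∀ (M : MBRealization Pm) (s : M.F.S), s ∈ M.val A

inductive Side : Type
  | c : Side
  | o : Side
deriving DecidableEq

/-- A label `(α, d)` on a modal bracket, with `α ∈ J − {1}`. -/
structure MBLab (Pm : MBParams) where
  α : ℝ
  memJ : α ∈ Pm.J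
  ne_one : α ≠ 1
  d : Side

mutual
/-- Nested-sequents: a finite tree whose nodes are sequents (pairs of finite
sets of formulas) and whose edges carry labels. -/
inductive NSeq (Pm : MBParams) : Type
  | node : Finset (MBForm Pm) → Finset (MBForm Pm) → NSeqs Pm → NSeq Pm
/-- A finite list of labelled child nested-sequents. -/
inductive NSeqs (Pm : MBParams) : Type
  | nil : NSeqs Pm
  | cons : MBLab Pm → NSeq Pm → NSeqs Pm → NSeqs Pm
end

/-- The `i`-th labelled child. -/
def NSeqs.get {Pm : MBParams} : NSeqs Pm → ℕ → Option (MBLab Pm × NSeq Pm)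
  | .nil, _ => none
  | .cons l t _, 0 => some (l, t)
  | .cons _ _ ts, n+1 => ts.get n

/-- `SubAt t p u`: the subtree of `t` at the path (node address) `p` is `u`. -/
inductive SubAt {Pm : MBParams} : NSeq Pm → List ℕ → NSeq Pm → Prop
  | here (t : NSeq Pm) : SubAt t [] t
  | there {Γ Δ : Finset (MBForm Pm)} {ts : NSeqs Pm} {i : ℕ} {l : MBLab Pm}
      {u v : NSeq Pm} {p : List ℕ} :
      NSeqs.get ts i = some (l, u) → SubAt u p v → SubAt (.node Γ Δ ts) (i :: p) v

/-- `p` is (the address of) a node of `t`. -/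
def IsNode {Pm : MBParams} (t : NSeq Pm) (p : List ℕ) : Prop := ∃ u, SubAt t p u

mutual
/-- Replace the sequent at the node with address `p` by `Γ' ⇒ Δ'`
(children are kept). -/
def NSeq.setSeq {Pm : MBParams} :
    NSeq Pm → List ℕ → Finset (MBForm Pm) → Finset (MBForm Pm) → NSeq Pm
  | .node _ _ ts, [], Γ', Δ' => .node Γ' Δ' ts
  | .node Γ Δ ts, i :: p, Γ', Δ' => .node Γ Δ (NSeqs.setSeqs ts i p Γ' Δ')
def NSeqs.setSeqs {Pm : MBParams} :
    NSeqs Pm → ℕ → List ℕ → Finset (MBForm Pm) → Finset (MBForm Pm) → NSeqs Pm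
  | .nil, _, _, _, _ => .nil
  | .cons l t ts, 0, p, Γ', Δ' => .cons l (t.setSeq p Γ' Δ') ts
  | .cons l t ts, n+1, p, Γ', Δ' => .cons l t (NSeqs.setSeqs ts n p Γ' Δ')
end

/-- Append a labelled child at the end of a children list. -/
def NSeqs.snoc {Pm : MBParams} : NSeqs Pm → MBLab Pm → NSeq Pm → NSeqs Pm
  | .nil, l, u => .cons l u .nil
  | .cons l' t ts, l, u => .cons l' t (ts.snoc l u)

mutual
/-- Add a new child `[u]_l` at the node with address `p`. -/
def NSeq.addChild {Pm : MBParams} : NSeq Pm → List ℕ → MBLab Pm → NSeq Pm → NSeq Pm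
  | .node Γ Δ ts, [], l, u => .node Γ Δ (ts.snoc l u)
  | .node Γ Δ ts, i :: p, l, u => .node Γ Δ (NSeqs.addChilds ts i p l u)
def NSeqs.addChilds {Pm : MBParams} : NSeqs Pm → ℕ → List ℕ → MBLab Pm → NSeq Pm → NSeqs Pm
  | .nil, _, _, _, _ => .nil
  | .cons l' t ts, 0, p, l, u => .cons l' (t.addChild p l u) ts
  | .cons l' t ts, n+1, p, l, u => .cons l' t (NSeqs.addChilds ts n p l u)
end


/-- Logical connectives defined by abbreviation: `A ∨ B`. -/
def MBForm.or {Pm : MBParams} (A B : MBForm Pm) : MBForm Pm := .neg (.conj (.neg A) (.neg B))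

/-- `A → B := ¬A ∨ B`. -/
def MBForm.imp {Pm : MBParams} (A B : MBForm Pm) : MBForm Pm := (MBForm.neg A).or B

/-- Conjunction of a list of formulas. -/
def conjList {Pm : MBParams} : List (MBForm Pm) → MBForm Pm
  | [] => .top
  | [A] => A
  | A :: B :: rest => .conj A (conjList (B :: rest))

/-- Disjunction of a list of formulas. -/
def disjList {Pm : MBParams} : List (MBForm Pm) → MBForm Pm
  | [] => .bot
  | [A] => A
  | A :: B :: rest => (A).or (disjList (B :: rest))

/-- `⋀Γ → ⋁Δ`. -/
noncomputable def seqForm {Pm : MBParams} (Γ Δ : Finset (MBForm Pm)) : MBForm Pm :=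
  (conjList Γ.toList).imp (disjList Δ.toList)

/-- The box corresponding to a bracket label. -/
def MBLab.box {Pm : MBParams} (l : MBLab Pm) (A : MBForm Pm) : MBForm Pm :=
  match l.d with
  | .c => .boxc ⟨l.α, l.memJ⟩ A
  | .o => .boxo ⟨l.α, l.memJ⟩ A

mutual
/-- The interpretation `τ` of a nested-sequent as a formula. -/
noncomputable def NSeq.tau {Pm : MBParams} : NSeq Pm → MBForm Pm
  | .node Γ Δ ts => NSeqs.tauAux (seqForm Γ Δ) ts
noncomputable def NSeqs.tauAux {Pm : MBParams} : MBForm Pm → NSeqs Pm → MBForm Pm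
  | A, .nil => A
  | A, .cons l t ts => NSeqs.tauAux (A.or (l.box t.tau)) ts
end

/-- `E` is an embedding of the nested-sequent `t` into the realization `M`
(`E` is given on node addresses). -/
def IsEmb {Pm : MBParams} (M : MBRealization Pm) (t : NSeq Pm)
    (E : List ℕ → M.F.S) : Prop :=
  ∀ p Γ Δ ts i l u, SubAt t p (.node Γ Δ ts) → NSeqs.get ts i = some (l, u) →
    (l.d = Side.c → l.α ≤ M.F.R (E p) (E (p ++ [i]))) ∧
    (l.d = Side.o → l.α < M.F.R (E p) (E (p ++ [i])))

/-- The nested-sequent `t` is false in `M` under `E`. -/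
def FalseUnder {Pm : MBParams} (M : MBRealization Pm) (t : NSeq Pm)
    (E : List ℕ → M.F.S) : Prop :=
  ∀ p Γ Δ ts, SubAt t p (.node Γ Δ ts) →
    (∀ A ∈ Γ, E p ∈ M.val A) ∧ (∀ A ∈ Δ, E p ∉ M.val A)

/-- Validity of a nested-sequent: it is not false under any embedding into
any MB-realization. -/
def NSValid {Pm : MBParams} (t : NSeq Pm) : Prop :=
  ∀ (M : MBRealization Pm) (E : List ℕ → M.F.S), IsEmb M t E → ¬ FalseUnder M t E


/-- `□^d_α A`. -/
def mkBox {Pm : MBParams} (d : Side) (α : Pm.J) (A : MBForm Pm) : MBForm Pm :=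
  match d with
  | .c => .boxc α A
  | .o => .boxo α A

/-- The total order `⪯` on `I × {c,o}`: `pleq α d β d'` means `(α,d) ⪯ (β,d')`. -/
def pleq : ℝ → Side → ℝ → Side → Prop
  | α, .o, β, .c => α < β
  | α, _, β, _ => α ≤ β

/-- Provability in the nested-sequent calculus **NSMB**.  The boolean
parameter records whether the rule (cut) may be used. -/
inductive Provable {Pm : MBParams} : Bool → NSeq Pm → Prop
  /-- axiom `‖A, Γ ⇒ Δ, A, T‖` -/
  | axId {cut : Bool} {t : NSeq Pm} {p Γ Δ ts A} :
      SubAt t p (.node Γ Δ ts) → A ∈ Γ → A ∈ Δ → Provable cut t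
  /-- axiom `‖Γ ⇒ Δ, ⊤, T‖` -/
  | axTop {cut : Bool} {t : NSeq Pm} {p Γ Δ ts} :
      SubAt t p (.node Γ Δ ts) → MBForm.top ∈ Δ → Provable cut t
  /-- axiom `‖⊥, Γ ⇒ Δ, T‖` -/
  | axBot {cut : Bool} {t : NSeq Pm} {p Γ Δ ts} :
      SubAt t p (.node Γ Δ ts) → MBForm.bot ∈ Γ → Provable cut t
  /-- axiom `‖Γ ⇒ Δ, □^o_1 A, T‖` -/
  | axBoxO1 {cut : Bool} {t : NSeq Pm} {p Γ Δ ts A} :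
      SubAt t p (.node Γ Δ ts) → MBForm.boxo ⟨1, Pm.one_mem⟩ A ∈ Δ → Provable cut t
  /-- rule (cut) -/
  | cutR {t : NSeq Pm} {p Γ Δ ts A} :
      SubAt t p (.node Γ Δ ts) →
      Provable true (t.setSeq p Γ (insert A Δ)) →
      Provable true (t.setSeq p (insert A Γ) Δ) →
      Provable true t
  /-- rule (wL) -/
  | wL {cut : Bool} {t : NSeq Pm} {p Γ Δ ts A} :
      SubAt t p (.node Γ Δ ts) → Provable cut t →
      Provable cut (t.setSeq p (insert A Γ) Δ)
  /-- rule (wR) -/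
  | wR {cut : Bool} {t : NSeq Pm} {p Γ Δ ts A} :
      SubAt t p (.node Γ Δ ts) → Provable cut t →
      Provable cut (t.setSeq p Γ (insert A Δ))
  /-- rule (¬L) -/
  | negL {cut : Bool} {t : NSeq Pm} {p Γ Δ ts A} :
      SubAt t p (.node Γ Δ ts) →
      Provable cut (t.setSeq p Γ (insert A Δ)) →
      Provable cut (t.setSeq p (insert (MBForm.neg A) Γ) Δ)
  /-- rule (¬R) -/
  | negR {cut : Bool} {t : NSeq Pm} {p Γ Δ ts A} :
      SubAt t p (.node Γ Δ ts) →
      Provable cut (t.setSeq p (insert A Γ) Δ) →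
      Provable cut (t.setSeq p Γ (insert (MBForm.neg A) Δ))
  /-- rule (∧L) -/
  | andL {cut : Bool} {t : NSeq Pm} {p Γ Δ ts A B} :
      SubAt t p (.node Γ Δ ts) →
      Provable cut (t.setSeq p (insert A (insert B Γ)) Δ) →
      Provable cut (t.setSeq p (insert (MBForm.conj A B) Γ) Δ)
  /-- rule (∧R) -/
  | andR {cut : Bool} {t : NSeq Pm} {p Γ Δ ts A B} :
      SubAt t p (.node Γ Δ ts) →
      Provable cut (t.setSeq p Γ (insert A Δ)) →
      Provable cut (t.setSeq p Γ (insert B Δ)) →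
      Provable cut (t.setSeq p Γ (insert (MBForm.conj A B) Δ))
  /-- rule (□L), with side condition `(α,d) ⪯ (β,d')` -/
  | boxL {cut : Bool} {t : NSeq Pm} {p Γ Δ ts i l u Γ' Δ' ts' A} {α : Pm.J} {d : Side} :
      SubAt t p (.node Γ Δ ts) → NSeqs.get ts i = some (l, u) →
      SubAt t (p ++ [i]) (.node Γ' Δ' ts') →
      pleq (α : ℝ) d l.α l.d →
      Provable cut (t.setSeq (p ++ [i]) (insert A Γ') Δ') →
      Provable cut (t.setSeq p (insert (mkBox d α A) Γ) Δ)
  /-- rule (□L sym), with side condition `(α,d) ⪯ (β,d')` -/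
  | boxLsym {cut : Bool} {t : NSeq Pm} {p Γ Δ ts i l u Γ' Δ' ts' A} {α : Pm.J} {d : Side} :
      SubAt t p (.node Γ Δ ts) → NSeqs.get ts i = some (l, u) →
      SubAt t (p ++ [i]) (.node Γ' Δ' ts') →
      pleq (α : ℝ) d l.α l.d →
      Provable cut (t.setSeq p (insert A Γ) Δ) →
      Provable cut (t.setSeq (p ++ [i]) (insert (mkBox d α A) Γ') Δ')
  /-- rule (□L self), with side condition `(α,d) ≠ (1,o)` -/
  | boxLself {cut : Bool} {t : NSeq Pm} {p Γ Δ ts A} {α : Pm.J} {d : Side} :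
      SubAt t p (.node Γ Δ ts) → ¬((α : ℝ) = 1 ∧ d = Side.o) →
      Provable cut (t.setSeq p (insert A Γ) Δ) →
      Provable cut (t.setSeq p (insert (mkBox d α A) Γ) Δ)
  /-- rule (□^c_0): erase `A` from the left of one node and add `□^c_0 A`
  to the left of another arbitrary node -/
  | boxC0 {cut : Bool} {t : NSeq Pm} {p Γ Δ ts q Γ'' Δ'' ts'' A} :
      SubAt t p (.node Γ Δ ts) → SubAt t q (.node Γ'' Δ'' ts'') →
      Provable cut (t.setSeq p (insert A Γ) Δ) →
      Provable cut (t.setSeq q (insert (MBForm.boxc ⟨0, Pm.zero_mem⟩ A) Γ'') Δ'')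
  /-- rule (□R) -/
  | boxR {cut : Bool} {t : NSeq Pm} {p Γ Δ ts A} {l : MBLab Pm} :
      SubAt t p (.node Γ Δ ts) →
      Provable cut (t.addChild p l (.node ∅ {A} .nil)) →
      Provable cut (t.setSeq p Γ (insert (l.box A) Δ))
  /-- rule (□R self) -/
  | boxRself {cut : Bool} {t : NSeq Pm} {p Γ Δ ts A} :
      SubAt t p (.node Γ Δ ts) →
      Provable cut (t.setSeq p Γ (insert A Δ)) →
      Provable cut (t.setSeq p Γ (insert (MBForm.boxc ⟨1, Pm.one_mem⟩ A) Δ))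


/-- The subformula relation. -/
inductive Subf {Pm : MBParams} : MBForm Pm → MBForm Pm → Prop
  | refl (A : MBForm Pm) : Subf A A
  | negS {A B : MBForm Pm} : Subf A B → Subf A (.neg B)
  | conjL {A B C : MBForm Pm} : Subf A B → Subf A (.conj B C)
  | conjR {A B C : MBForm Pm} : Subf A C → Subf A (.conj B C)
  | boxcS {A B : MBForm Pm} {α : Pm.J} : Subf A B → Subf A (.boxc α B)
  | boxoS {A B : MBForm Pm} {α : Pm.J} : Subf A B → Subf A (.boxo α B)

/-- `A` occurs in (some sequent of) the nested-sequent `t`. -/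
def OccursIn {Pm : MBParams} (A : MBForm Pm) (t : NSeq Pm) : Prop :=
  ∃ p Γ Δ ts, SubAt t p (.node Γ Δ ts) ∧ (A ∈ Γ ∨ A ∈ Δ)

/-- One step of the saturation procedure used to build `Γ_C ⇒ Δ_C, T_C`.
The state is a nested-sequent together with the set of (address, formula)
occurrences of right-hand boxed formulas that have already been processed by
step (8). -/
inductive SatStep {Pm : MBParams} :
    NSeq Pm × Set (List ℕ × MBForm Pm) → NSeq Pm × Set (List ℕ × MBForm Pm) → Prop
  /-- step (1): `A ∧ B` on the left -/
  | andL {t D p Γ Δ ts A B} :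
      SubAt t p (.node Γ Δ ts) → MBForm.conj A B ∈ Γ →
      SatStep (t, D) (t.setSeq p (insert A (insert B Γ)) Δ, D)
  /-- step (2): `A ∧ B` on the right; the disjunct keeping unprovability is adopted -/
  | andR {t D p Γ Δ ts A B C} :
      SubAt t p (.node Γ Δ ts) → MBForm.conj A B ∈ Δ → (C = A ∨ C = B) →
      ¬ Provable true (t.setSeq p Γ (insert C Δ)) →
      SatStep (t, D) (t.setSeq p Γ (insert C Δ), D)
  /-- step (3): `¬A` on the left -/
  | negL {t D p Γ Δ ts A} :
      SubAt t p (.node Γ Δ ts) → MBForm.neg A ∈ Γ →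
      SatStep (t, D) (t.setSeq p Γ (insert A Δ), D)
  /-- step (4): `¬A` on the right -/
  | negR {t D p Γ Δ ts A} :
      SubAt t p (.node Γ Δ ts) → MBForm.neg A ∈ Δ →
      SatStep (t, D) (t.setSeq p (insert A Γ) Δ, D)
  /-- step (5): `□^d_α A` on the left of the parent of a bracket with `(α,d) ⪯ (β,d')` -/
  | boxL {t D p Γ Δ ts i l u Γ' Δ' ts' A} {α : Pm.J} {d : Side} :
      SubAt t p (.node Γ Δ ts) → NSeqs.get ts i = some (l, u) →
      SubAt t (p ++ [i]) (.node Γ' Δ' ts') →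
      pleq (α : ℝ) d l.α l.d → mkBox d α A ∈ Γ →
      SatStep (t, D) (t.setSeq (p ++ [i]) (insert A Γ') Δ', D)
  /-- step (6): `□^d_α A` on the left of the child of a bracket with `(α,d) ⪯ (β,d')` -/
  | boxLsym {t D p Γ Δ ts i l u Γ' Δ' ts' A} {α : Pm.J} {d : Side} :
      SubAt t p (.node Γ Δ ts) → NSeqs.get ts i = some (l, u) →
      SubAt t (p ++ [i]) (.node Γ' Δ' ts') →
      pleq (α : ℝ) d l.α l.d → mkBox d α A ∈ Γ' →
      SatStep (t, D) (t.setSeq p (insert A Γ) Δ, D)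
  /-- step (7): `□^d_α A` on the left, `(α,d) ≠ (1,o)` -/
  | boxLself {t D p Γ Δ ts A} {α : Pm.J} {d : Side} :
      SubAt t p (.node Γ Δ ts) → ¬((α : ℝ) = 1 ∧ d = Side.o) → mkBox d α A ∈ Γ →
      SatStep (t, D) (t.setSeq p (insert A Γ) Δ, D)
  /-- step (8): `□^d_α A` on the right (`α ≠ 1`), performed once per occurrence -/
  | boxR {t D p Γ Δ ts A} {α : Pm.J} {d : Side} (hne : (α : ℝ) ≠ 1) :
      SubAt t p (.node Γ Δ ts) → mkBox d α A ∈ Δ → (p, mkBox d α A) ∉ D →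
      SatStep (t, D)
        (t.addChild p ⟨(α : ℝ), α.2, hne, d⟩ (.node ∅ {A} .nil),
         insert (p, mkBox d α A) D)
  /-- step (9): `□^c_1 A` on the right -/
  | boxRself {t D p Γ Δ ts A} :
      SubAt t p (.node Γ Δ ts) → MBForm.boxc ⟨1, Pm.one_mem⟩ A ∈ Δ →
      SatStep (t, D) (t.setSeq p Γ (insert A Δ), D)
  /-- step (10): `□^c_0 A` on the left of some node: add `A` to the left of any node -/
  | boxC0 {t D p Γ Δ ts q Γ'' Δ'' ts'' A} :
      SubAt t p (.node Γ Δ ts) → MBForm.boxc ⟨0, Pm.zero_mem⟩ A ∈ Γ →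
      SubAt t q (.node Γ'' Δ'' ts'') →
      SatStep (t, D) (t.setSeq q (insert A Γ'') Δ'', D)

/-- A state of the saturation procedure is saturated (terminal) when no
saturation step changes it any more. -/
def Saturated {Pm : MBParams} (s : NSeq Pm × Set (List ℕ × MBForm Pm)) : Prop :=
  ∀ s', SatStep s s' → s' = s


mutual
/-- The subtree of `t` at address `p`, as a function. -/
def NSeq.sub? {Pm : MBParams} : NSeq Pm → List ℕ → Option (NSeq Pm)
  | t, [] => some t
  | .node _ _ ts, i :: p => NSeqs.subs? ts i p
def NSeqs.subs? {Pm : MBParams} : NSeqs Pm → ℕ → List ℕ → Option (NSeq Pm)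
  | .nil, _, _ => none
  | .cons _ t _, 0, p => t.sub? p
  | .cons _ _ ts, n+1, p => NSeqs.subs? ts n p
end

/-- The label of the edge from the node at address `p` to its `i`-th child. -/
def labelAt {Pm : MBParams} (t : NSeq Pm) (p : List ℕ) (i : ℕ) : Option (MBLab Pm) :=
  match t.sub? p with
  | some (.node _ _ ts) => (NSeqs.get ts i).map Prod.fst
  | none => none

/-- The set of elements of `J` appearing in a formula. -/
def MBForm.jsetF {Pm : MBParams} : MBForm Pm → Set ℝ
  | .var _ => ∅
  | .top => ∅
  | .bot => ∅
  | .neg A => A.jsetF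
  | .conj A B => A.jsetF ∪ B.jsetF
  | .boxc α A => insert (α : ℝ) A.jsetF
  | .boxo α A => insert (α : ℝ) A.jsetF

mutual
/-- The numbers appearing in a nested-sequent (in formulas or brackets). -/
def NSeq.jsetT {Pm : MBParams} : NSeq Pm → Set ℝ
  | .node Γ Δ ts =>
      (⋃ A ∈ Γ, MBForm.jsetF A) ∪ (⋃ A ∈ Δ, MBForm.jsetF A) ∪ NSeqs.jsetTs ts
def NSeqs.jsetTs {Pm : MBParams} : NSeqs Pm → Set ℝ
  | .nil => ∅
  | .cons l t ts => insert l.α (t.jsetT ∪ NSeqs.jsetTs ts)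
end

/-- `(Γ ⇒ Δ, T)_J`: the numbers appearing in the nested-sequent, with `0` and `1`. -/
def jset {Pm : MBParams} (t : NSeq Pm) : Set ℝ :=
  insert (0:ℝ) (insert (1:ℝ) t.jsetT)

/-- `U` is an interpolated set of `Js`. -/
def Interpolated (Js U : Set ℝ) : Prop :=
  U.Finite ∧ U ⊆ Set.Icc (0:ℝ) 1 ∧ Js ⊆ U ∧
    ∀ α ∈ Js, ∀ β ∈ Js, α < β → (∀ γ ∈ Js, ¬ (α < γ ∧ γ < β)) →
      ∃! δ, δ ∈ U ∧ α < δ ∧ δ < β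

/-- `Suc U α`: the successor of `α` in the interpolated set `U` (with `Suc 1 = 1`). -/
noncomputable def Suc (U : Set ℝ) (α : ℝ) : ℝ := sInf ((U ∩ Set.Ioi α) ∪ {1})

/-- Auxiliary value of the canonical relation in case `q` is the child of `p`
via a bracket (`β` for `[·]^c_β`, `Suc β` for `[·]^o_β`), and `0` otherwise. -/
noncomputable def lval {Pm : MBParams} (t : NSeq Pm) (U : Set ℝ) (p q : List ℕ) : ℝ :=
  match q.getLast? with
  | none => 0
  | some i =>
      if q.dropLast = p then
        match labelAt t p i with
        | some l => (match l.d with | Side.c => l.α | Side.o => Suc U l.α)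
        | none => 0
      else 0

/-- The canonical relation `R_C` (on node addresses). -/
noncomputable def RC {Pm : MBParams} (t : NSeq Pm) (U : Set ℝ) (p q : List ℕ) : ℝ :=
  if p = q then 1 else max (lval t U p q) (lval t U q p)

/-- The worlds of the canonical model: the nodes of the saturated nested-sequent. -/
def World {Pm : MBParams} (t : NSeq Pm) : Type := {p : List ℕ // IsNode t p}

/-- The canonical relation `R_C`, as a function on the worlds. -/
noncomputable def RCW {Pm : MBParams} (t : NSeq Pm) (U : Set ℝ) (p q : World t) : ℝ :=
  RC t U p.val q.val

/-- The canonical valuation `V_C` of the propositional variables. -/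
def VC {Pm : MBParams} (t : NSeq Pm) (n : ℕ) : Set (World t) :=
  {p | ∃ Γ Δ ts, SubAt t p.val (.node Γ Δ ts) ∧ MBForm.var n ∈ Γ}

/-- `P_C`: the family of all definable sets of worlds of the canonical model. -/
def PC {Pm : MBParams} (t : NSeq Pm) (U : Set ℝ) : Set (Set (World t)) :=
  {X | ∃ A : MBForm Pm, X = MBForm.valR (RCW t U) (VC t) A}


section Statement0
variable {Pm : MBParams}

lemma mem_or_val {S : Type} {R : S → S → ℝ} {V : ℕ → Set S} {A B : MBForm Pm} {s : S} :
    s ∈ (A.or B).valR R V ↔ s ∈ A.valR R V ∨ s ∈ B.valR R V := by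
  simp [MBForm.or, MBForm.valR]
  tauto

lemma mem_conjList_val {S : Type} {R : S → S → ℝ} {V : ℕ → Set S} :
    ∀ {L : List (MBForm Pm)} {s : S},
      s ∈ (conjList L).valR R V ↔ ∀ A ∈ L, s ∈ A.valR R V := by
  intro L
  induction L with
  | nil => intro s; simp [conjList, MBForm.valR]
  | cons A L ih =>
    intro s
    cases L with
    | nil => simp [conjList]
    | cons B L' =>
      simp only [conjList, MBForm.valR, Set.mem_inter_iff, List.mem_cons]
      rw [show ((conjList (B :: L')).valR R V : Set S) = _ from rfl]
      constructor
      · rintro ⟨h1, h2⟩ C hC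
        rcases hC with h | h
        · subst h; exact h1
        · exact ih.mp h2 C (by simpa using h)
      · intro h
        refine ⟨h A (Or.inl rfl), ih.mpr ?_⟩
        intro C hC
        exact h C (Or.inr (by simpa using hC))

lemma mem_disjList_val {S : Type} {R : S → S → ℝ} {V : ℕ → Set S} :
    ∀ {L : List (MBForm Pm)} {s : S},
      s ∈ (disjList L).valR R V ↔ ∃ A ∈ L, s ∈ A.valR R V := by
  intro L
  induction L with
  | nil => intro s; simp [disjList, MBForm.valR]
  | cons A L ih =>
    intro s
    cases L with
    | nil => simp [disjList]
    | cons B L' =>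
      rw [show disjList (A :: B :: L') = A.or (disjList (B :: L')) from rfl, mem_or_val, ih]
      simp only [List.mem_cons]
      constructor
      · rintro (h | ⟨C, hC, h⟩)
        · exact ⟨A, Or.inl rfl, h⟩
        · exact ⟨C, Or.inr hC, h⟩
      · rintro ⟨C, (h | h), hc⟩
        · subst h; exact Or.inl hc
        · exact Or.inr ⟨C, h, hc⟩

lemma not_mem_seqForm {S : Type} {R : S → S → ℝ} {V : ℕ → Set S}
    {Γ Δ : Finset (MBForm Pm)} {s : S} :
    s ∉ (seqForm Γ Δ).valR R V ↔
      (∀ A ∈ Γ, s ∈ A.valR R V) ∧ ∀ A ∈ Δ, s ∉ A.valR R V := by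
  rw [show seqForm Γ Δ = (MBForm.neg (conjList Γ.toList)).or (disjList Δ.toList) from rfl]
  rw [mem_or_val]
  rw [show ((MBForm.neg (conjList Γ.toList)).valR R V : Set S) = ((conjList Γ.toList).valR R V)ᶜ from rfl]
  rw [Set.mem_compl_iff]
  push_neg
  rw [mem_conjList_val]
  constructor
  · rintro ⟨h1, h2⟩
    refine ⟨fun A hA => h1 A (by simpa using hA), fun A hA hs => ?_⟩
    exact h2 (mem_disjList_val.mpr ⟨A, by simpa using hA, hs⟩)
  · rintro ⟨h1, h2⟩
    refine ⟨fun A hA => h1 A (by simpa using hA), fun hd => ?_⟩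
    obtain ⟨A, hA, hs⟩ := mem_disjList_val.mp hd
    exact h2 A (by simpa using hA) hs

lemma not_mem_box {M : MBRealization Pm} {l : MBLab Pm} {B : MBForm Pm} {s : M.F.S} :
    s ∉ M.val (l.box B) ↔
      ∃ t', (l.d = Side.c → l.α ≤ M.F.R s t') ∧ (l.d = Side.o → l.α < M.F.R s t') ∧
        t' ∉ M.val B := by
  obtain ⟨α, hmem, hne, d⟩ := l
  cases d
  · constructor
    · intro h
      have h' : ¬ ∀ t', α ≤ M.F.R s t' → t' ∈ MBForm.valR M.F.R M.V B := h
      push_neg at h'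
      obtain ⟨t', h1, h2⟩ := h'
      refine ⟨t', fun _ => h1, fun hc => ?_, h2⟩
      exact absurd hc (by simp)
    · rintro ⟨t', h1, _, h2⟩ hm
      exact h2 (hm t' (h1 rfl))
  · constructor
    · intro h
      have h' : ¬ ∀ t', α < M.F.R s t' → t' ∈ MBForm.valR M.F.R M.V B := h
      push_neg at h'
      obtain ⟨t', h1, h2⟩ := h'
      refine ⟨t', fun hc => ?_, fun _ => h1, h2⟩
      exact absurd hc (by simp)
    · rintro ⟨t', _, h1, h2⟩ hm
      exact h2 (hm t' (h1 rfl))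

lemma mem_box_elim {M : MBRealization Pm} {l : MBLab Pm} {B : MBForm Pm} {s t' : M.F.S}
    (h : s ∈ M.val (l.box B))
    (h1 : l.d = Side.c → l.α ≤ M.F.R s t')
    (h2 : l.d = Side.o → l.α < M.F.R s t') : t' ∈ M.val B := by
  obtain ⟨α, hmem, hne, d⟩ := l
  cases d
  · exact h t' (h1 rfl)
  · exact h t' (h2 rfl)

lemma sizeOf_get : ∀ (i : ℕ) (ts : NSeqs Pm) (l : MBLab Pm) (v : NSeq Pm),
    ts.get i = some (l, v) → sizeOf v < sizeOf ts := by
  intro i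
  induction i with
  | zero =>
    intro ts l v h
    cases ts with
    | nil => simp [NSeqs.get] at h
    | cons l' t ts =>
      simp [NSeqs.get] at h
      obtain ⟨h1, h2⟩ := h
      subst h2
      simp
      omega
  | succ n ih =>
    intro ts l v h
    cases ts with
    | nil => simp [NSeqs.get] at h
    | cons l' t ts =>
      simp [NSeqs.get] at h
      have := ih ts l v h
      simp
      omega

lemma mem_tauAux {S : Type} {R : S → S → ℝ} {V : ℕ → Set S} :
    ∀ (ts : NSeqs Pm) (A : MBForm Pm) (s : S),
      s ∈ (NSeqs.tauAux A ts).valR R V ↔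
        s ∈ A.valR R V ∨
          ∃ i l u, NSeqs.get ts i = some (l, u) ∧ s ∈ (MBLab.box l (NSeq.tau u)).valR R V := by
  suffices H : ∀ n (ts : NSeqs Pm), sizeOf ts ≤ n → ∀ (A : MBForm Pm) (s : S),
      s ∈ (NSeqs.tauAux A ts).valR R V ↔
        s ∈ A.valR R V ∨
          ∃ i l u, NSeqs.get ts i = some (l, u) ∧ s ∈ (MBLab.box l (NSeq.tau u)).valR R V by
    exact fun ts => H (sizeOf ts) ts le_rfl
  intro n
  induction n with
  | zero =>
    intro ts h
    cases ts <;> simp at h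
  | succ n ih =>
    intro ts hts A s
    cases ts with
    | nil =>
      simp [NSeqs.tauAux, NSeqs.get]
    | cons l t ts =>
      rw [show NSeqs.tauAux A (NSeqs.cons l t ts) = NSeqs.tauAux (A.or (l.box t.tau)) ts from rfl]
      have hsz : sizeOf ts ≤ n := by simp at hts; omega
      rw [ih ts hsz, mem_or_val]
      constructor
      · rintro ((h | h) | ⟨i, l', u, hg, h⟩)
        · exact Or.inl h
        · exact Or.inr ⟨0, l, t, rfl, h⟩
        · exact Or.inr ⟨i + 1, l', u, hg, h⟩
      · rintro (h | ⟨i, l', u, hg, h⟩)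
        · exact Or.inl (Or.inl h)
        · cases i with
          | zero =>
            simp [NSeqs.get] at hg
            obtain ⟨h1, h2⟩ := hg
            subst h1; subst h2
            exact Or.inl (Or.inr h)
          | succ i =>
            exact Or.inr ⟨i, l', u, hg, h⟩

lemma not_mem_tau_box {M : MBRealization Pm} {Γ Δ : Finset (MBForm Pm)} {ts : NSeqs Pm}
    {s : M.F.S} (hs : s ∉ M.val (NSeq.node Γ Δ ts).tau)
    {i : ℕ} {l : MBLab Pm} {v : NSeq Pm} (hg : NSeqs.get ts i = some (l, v)) :
    s ∉ M.val (l.box v.tau) := by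
  intro hc
  exact hs ((mem_tauAux ts (seqForm Γ Δ) s).mpr (Or.inr ⟨i, l, v, hg, hc⟩))

lemma not_mem_tau_seq {M : MBRealization Pm} {Γ Δ : Finset (MBForm Pm)} {ts : NSeqs Pm}
    {s : M.F.S} (hs : s ∉ M.val (NSeq.node Γ Δ ts).tau) :
    s ∉ (seqForm Γ Δ).valR M.F.R M.V := by
  intro hc
  exact hs ((mem_tauAux ts (seqForm Γ Δ) s).mpr (Or.inl hc))

lemma subAt_trans {t u v : NSeq Pm} {p q : List ℕ}
    (h1 : SubAt t p u) (h2 : SubAt u q v) : SubAt t (p ++ q) v := by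
  induction h1 with
  | here => simpa using h2
  | there hg _ ih => exact .there hg (ih h2)

open Classical in
noncomputable def pick (M : MBRealization Pm) (l : MBLab Pm) (v : NSeq Pm) (s : M.F.S) :
    M.F.S :=
  if h : ∃ t', (l.d = Side.c → l.α ≤ M.F.R s t') ∧ (l.d = Side.o → l.α < M.F.R s t') ∧
      t' ∉ M.val v.tau then h.choose else s

lemma pick_spec {M : MBRealization Pm} {l : MBLab Pm} {v : NSeq Pm} {s : M.F.S}
    (h : s ∉ M.val (l.box v.tau)) :
    (l.d = Side.c → l.α ≤ M.F.R s (pick M l v s)) ∧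
      (l.d = Side.o → l.α < M.F.R s (pick M l v s)) ∧ pick M l v s ∉ M.val v.tau := by
  rw [not_mem_box] at h
  rw [pick]
  rw [dif_pos h]
  exact h.choose_spec

mutual
noncomputable def embF (M : MBRealization Pm) : NSeq Pm → M.F.S → List ℕ → M.F.S
  | _, s, [] => s
  | .node _ _ ts, s, i :: p => embFs M ts s i p
noncomputable def embFs (M : MBRealization Pm) : NSeqs Pm → M.F.S → ℕ → List ℕ → M.F.S
  | .nil, s, _, _ => s
  | .cons l v _, s, 0, p => embF M v (pick M l v s) p
  | .cons _ _ ts, s, n+1, p => embFs M ts s n p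
end

lemma embF_nil {M : MBRealization Pm} (u : NSeq Pm) (s : M.F.S) :
    embF M u s [] = s := by
  cases u
  rw [embF]

lemma embFs_get {M : MBRealization Pm} :
    ∀ (i : ℕ) (ts : NSeqs Pm) (l : MBLab Pm) (v : NSeq Pm), ts.get i = some (l, v) →
      ∀ s p, embFs M ts s i p = embF M v (pick M l v s) p := by
  intro i
  induction i with
  | zero =>
    intro ts l v h s p
    cases ts with
    | nil => simp [NSeqs.get] at h
    | cons l' t ts =>
      simp [NSeqs.get] at h
      obtain ⟨h1, h2⟩ := h
      subst h1; subst h2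
      rw [embFs]
  | succ n ih =>
    intro ts l v h s p
    cases ts with
    | nil => simp [NSeqs.get] at h
    | cons l' t ts => exact ih ts l v h s p

lemma embF_cons {M : MBRealization Pm} {Γ Δ : Finset (MBForm Pm)} {ts : NSeqs Pm}
    {i : ℕ} {l : MBLab Pm} {v : NSeq Pm} (h : ts.get i = some (l, v)) (s : M.F.S)
    (p : List ℕ) :
    embF M (NSeq.node Γ Δ ts) s (i :: p) = embF M v (pick M l v s) p := by
  rw [show embF M (NSeq.node Γ Δ ts) s (i :: p) = embFs M ts s i p from by rw [embF]]
  exact embFs_get i ts l v h s p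

lemma embF_false {M : MBRealization Pm} :
    ∀ (u : NSeq Pm) (s : M.F.S), s ∉ M.val u.tau →
      ∀ p v, SubAt u p v → embF M u s p ∉ M.val v.tau := by
  suffices H : ∀ n (u : NSeq Pm), sizeOf u ≤ n → ∀ (s : M.F.S), s ∉ M.val u.tau →
      ∀ p v, SubAt u p v → embF M u s p ∉ M.val v.tau by
    exact fun u => H (sizeOf u) u le_rfl
  intro n
  induction n with
  | zero => intro u h; cases u; simp at h
  | succ n ih =>
    intro u hu s hs p v hsub
    cases hsub with
    | here => rw [embF_nil]; exact hs
    | there hg hsub' =>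
      rename_i Γ Δ ts i l w p'
      have hw : s ∉ M.val (l.box w.tau) := not_mem_tau_box hs hg
      have hps := pick_spec hw
      rw [embF_cons hg]
      have hsz : sizeOf w ≤ n := by
        have := sizeOf_get i ts l w hg
        simp at hu
        omega
      exact ih w hsz _ hps.2.2 p' v hsub'

lemma embF_emb {M : MBRealization Pm} :
    ∀ (u : NSeq Pm) (s : M.F.S), s ∉ M.val u.tau →
      ∀ p Γ Δ ts, SubAt u p (.node Γ Δ ts) → ∀ i l v, NSeqs.get ts i = some (l, v) →
        (l.d = Side.c → l.α ≤ M.F.R (embF M u s p) (embF M u s (p ++ [i]))) ∧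
        (l.d = Side.o → l.α < M.F.R (embF M u s p) (embF M u s (p ++ [i]))) := by
  suffices H : ∀ n (u : NSeq Pm), sizeOf u ≤ n → ∀ (s : M.F.S), s ∉ M.val u.tau →
      ∀ p Γ Δ ts, SubAt u p (.node Γ Δ ts) → ∀ i l v, NSeqs.get ts i = some (l, v) →
        (l.d = Side.c → l.α ≤ M.F.R (embF M u s p) (embF M u s (p ++ [i]))) ∧
        (l.d = Side.o → l.α < M.F.R (embF M u s p) (embF M u s (p ++ [i]))) by
    exact fun u => H (sizeOf u) u le_rfl
  intro n
  induction n with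
  | zero => intro u h; cases u; simp at h
  | succ n ih =>
    intro u hu s hs p Γ Δ ts hsub i l v hg
    cases hsub with
    | here =>
      have hw : s ∉ M.val (l.box v.tau) := not_mem_tau_box hs hg
      have hps := pick_spec hw
      have h1 : embF M (NSeq.node Γ Δ ts) s [] = s := embF_nil _ _
      have h2 : embF M (NSeq.node Γ Δ ts) s ([] ++ [i]) = pick M l v s := by
        rw [show ([] ++ [i] : List ℕ) = [i] from rfl, embF_cons hg s [], embF_nil]
      rw [h1, h2]
      exact ⟨hps.1, hps.2.1⟩
    | there hg0 hsub' =>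
      rename_i Γ0 Δ0 ts0 j l0 w p'
      have hw : s ∉ M.val (l0.box w.tau) := not_mem_tau_box hs hg0
      have hps := pick_spec hw
      have h1 := embF_cons (Γ := Γ0) (Δ := Δ0) hg0 s p'
      have h2 := embF_cons (Γ := Γ0) (Δ := Δ0) hg0 s (p' ++ [i])
      have heq : (j :: p') ++ [i] = j :: (p' ++ [i]) := rfl
      rw [h1, heq, h2]
      have hsz : sizeOf w ≤ n := by
        have := sizeOf_get j ts0 l0 w hg0
        simp at hu
        omega
      exact ih w hsz _ hps.2.2 p' Γ Δ ts hsub' i l v hg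

lemma false_tau {M : MBRealization Pm} {t : NSeq Pm} {E : List ℕ → M.F.S}
    (he : IsEmb M t E) (hf : FalseUnder M t E) :
    ∀ (u : NSeq Pm) (p : List ℕ), SubAt t p u → E p ∉ M.val u.tau := by
  suffices H : ∀ n (u : NSeq Pm), sizeOf u ≤ n → ∀ (p : List ℕ), SubAt t p u →
      E p ∉ M.val u.tau by
    exact fun u => H (sizeOf u) u le_rfl
  intro n
  induction n with
  | zero => intro u h; cases u; simp at h
  | succ n ih =>
    intro u hu p hsub hmem
    obtain ⟨Γ, Δ, ts⟩ := u
    have hmem' : E p ∈ (seqForm Γ Δ).valR M.F.R M.V ∨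
        ∃ i l v, NSeqs.get ts i = some (l, v) ∧
          E p ∈ (MBLab.box l (NSeq.tau v)).valR M.F.R M.V :=
      (mem_tauAux ts (seqForm Γ Δ) (E p)).mp hmem
    rcases hmem' with h | ⟨i, l, v, hg, h⟩
    · obtain ⟨hΓ, hΔ⟩ := hf p Γ Δ ts hsub
      exact not_mem_seqForm.mpr ⟨hΓ, hΔ⟩ h
    · have hsub' : SubAt t (p ++ [i]) v := subAt_trans hsub (.there hg (.here v))
      have hsz : sizeOf v ≤ n := by
        have := sizeOf_get i ts l v hg
        simp at hu
        omega
      have hb := he p Γ Δ ts i l v hsub hg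
      have hv : E (p ++ [i]) ∈ M.val v.tau := mem_box_elim h hb.1 hb.2
      exact ih v hsz (p ++ [i]) hsub' hv

end Statement0


/-- A nested-sequent `Γ ⇒ Δ, T` is valid iff the MB-formula
`τ(Γ ⇒ Δ, T)` is valid. -/
theorem nsValid_iff_tau_valid {Pm : MBParams} (t : NSeq Pm) :
    NSValid t ↔ MBValid t.tau := by
  constructor
  · intro hns M s
    by_contra h
    refine hns M (embF M t s) ?_ ?_
    · intro p Γ Δ ts i l u hsub hg
      exact embF_emb t s h p Γ Δ ts hsub i l u hg
    · intro p Γ Δ ts hsub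
      have h2 := embF_false t s h p _ hsub
      exact not_mem_seqForm.mp (not_mem_tau_seq h2)
  · intro hv M E he hf
    exact false_tau he hf t [] (SubAt.here t) (hv M (E []))


end MBQL
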